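/- Let a = g(α) be a nonzero element of ℤ[α], where g(x) = a_0 + a_1 x + ⋯ + a_{m−1}x^{m−1} has integer coefficients, and let d be a positive real number with d ≥ (m−1)(1 + opc(a)^m·P_α·S_α²). Then for every ε with 0 < ε ≤ 1/d one has |g(α+ε) − g(α)| < |g(α)| and |g(α−ε) − g(α)| < |g(α)| (so the sign of g is constant on [α−ε, α+ε]). -/

import Mathlib

open Polynomial Finset

/-- The Euclidean norm of the coefficient vector `(p_0, …, p_{d-1})` of a polynomial. -/
noncomputable def normTwo (d : ℕ) (p : Polynomial ℤ) : ℝ :=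
  Real.sqrt (∑ i ∈ Finset.range d, ((p.coeff i : ℝ)) ^ 2)

/-- `‖f‖_∞` over the coefficients `f_0, …, f_{m-1}`. -/
def fninf (m : ℕ) (f : Polynomial ℤ) : ℤ :=
  ((Finset.univ.sup fun i : Fin m => (f.coeff (i : ℕ)).natAbs : ℕ) : ℤ)

/-- `M_α = m (1 + ‖f‖_∞)^{m-1}`. -/
noncomputable def Malpha (m : ℕ) (f : Polynomial ℤ) : ℝ :=
  (m : ℝ) * (1 + (fninf m f : ℝ)) ^ (m - 1)

/-- `P_α = m ‖f‖₂^{m-1} (M_α + √m)^{m-1}`. -/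
noncomputable def Palpha (m : ℕ) (f : Polynomial ℤ) : ℝ :=
  (m : ℝ) * normTwo (m + 1) f ^ (m - 1) * (Malpha m f + Real.sqrt m) ^ (m - 1)

/-- `S_α = 1 + |α| + ⋯ + |α|^{m-1}`. -/
noncomputable def Salpha (m : ℕ) (α : ℝ) : ℝ := ∑ k ∈ Finset.range m, |α| ^ k

/-- `opc a` for a coefficient vector `a`. -/
def opc {m : ℕ} (a : Fin m → ℤ) : ℤ :=
  ((Finset.univ.sup fun i => (a i).natAbs : ℕ) : ℤ)


/-! The nonzero algebraic integer `a = g(α)` has a nonzero integral norm, the product of its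
conjugates `g(σ α)`. Each conjugate root satisfies Cauchy's bound `|σ α| ≤ 1 + ‖f‖_∞`, so every
conjugate of `a` is at most `opc(a) · M_α`, and the real conjugate therefore satisfies
`|g(α)| ≥ (opc(a) · M_α)^{-(m-1)}`. On the other hand, for `|η| ≤ ε ≤ 1/d` every monomial moves by
`|(α + η)^i - α^i| ≤ (m - 1) ε S_α`, so `|g(α + η) - g(α)| ≤ m (m - 1) ε opc(a) S_α`, which the
choice of `d` makes smaller than that lower bound. -/

theorem abs_coeff_le_fninf {m i : ℕ} (f : ℤ[X]) (hi : i < m) : |(f.coeff i : ℝ)| ≤ fninf m f := by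
  rw [← Int.cast_abs, Int.abs_eq_natAbs, fninf]
  exact_mod_cast le_sup (f := fun j : Fin m => (f.coeff j).natAbs) (mem_univ ⟨i, hi⟩)

theorem abs_le_opc {m : ℕ} (a : Fin m → ℤ) (i : Fin m) : |(a i : ℝ)| ≤ opc a := by
  rw [← Int.cast_abs, Int.abs_eq_natAbs, opc]
  exact_mod_cast le_sup (f := fun j => (a j).natAbs) (mem_univ i)

theorem fninf_nonneg (m : ℕ) (f : ℤ[X]) : (0 : ℝ) ≤ fninf m f := by
  simp [fninf]

theorem opc_nonneg {m : ℕ} (a : Fin m → ℤ) : (0 : ℝ) ≤ opc a := by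
  simp [opc]

theorem Malpha_nonneg (m : ℕ) (f : ℤ[X]) : 0 ≤ Malpha m f := by
  have := fninf_nonneg m f
  rw [Malpha]
  positivity

theorem one_le_Salpha {m : ℕ} (hm : 0 < m) (x : ℝ) : 1 ≤ Salpha m x := by
  unfold Salpha
  simpa using single_le_sum (f := fun k => |x| ^ k) (fun _ _ => by positivity) (mem_range.mpr hm)

theorem one_le_normTwo {m : ℕ} {f : ℤ[X]} (hmonic : f.Monic) (hdeg : f.natDegree = m) :
    1 ≤ normTwo (m + 1) f := by
  rw [normTwo, Real.one_le_sqrt]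
  have := single_le_sum (f := fun i => (f.coeff i : ℝ) ^ 2) (fun _ _ => sq_nonneg _)
    (self_mem_range_succ m)
  simpa [← hdeg, hmonic.coeff_natDegree] using this

theorem mul_Malpha_pow_le_Palpha {m : ℕ} {f : ℤ[X]} (hmonic : f.Monic) (hdeg : f.natDegree = m) :
    m * Malpha m f ^ (m - 1) ≤ Palpha m f := by
  have hM := Malpha_nonneg m f
  calc m * Malpha m f ^ (m - 1) = m * 1 ^ (m - 1) * Malpha m f ^ (m - 1) := by simp
    _ ≤ Palpha m f := by
        have h2 := one_le_normTwo hmonic hdeg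
        have hM' : Malpha m f ≤ Malpha m f + √m := le_add_of_nonneg_right (Real.sqrt_nonneg _)
        rw [Palpha]
        gcongr

theorem mul_opc_mul_Salpha_mul_pow_le {m : ℕ} (hm : 0 < m) {f : ℤ[X]} (hmonic : f.Monic)
    (hdeg : f.natDegree = m) (a : Fin m → ℤ) (x : ℝ) :
    m * opc a * Salpha m x * ((opc a : ℝ) * Malpha m f) ^ (m - 1) ≤
      (opc a : ℝ) ^ m * Palpha m f * Salpha m x ^ 2 := by
  have hS := one_le_Salpha hm x
  have hSS : Salpha m x ≤ Salpha m x ^ 2 := by nlinarith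
  have hH := opc_nonneg a
  have hP := mul_Malpha_pow_le_Palpha hmonic hdeg
  have hP0 : 0 ≤ Palpha m f := by
    have := Malpha_nonneg m f
    exact (by positivity : (0 : ℝ) ≤ m * Malpha m f ^ (m - 1)).trans hP
  calc m * opc a * Salpha m x * ((opc a : ℝ) * Malpha m f) ^ (m - 1)
      = (opc a : ℝ) ^ (m - 1 + 1) * (m * Malpha m f ^ (m - 1)) * Salpha m x := by ring
    _ ≤ (opc a : ℝ) ^ m * Palpha m f * Salpha m x ^ 2 := by
        rw [Nat.sub_add_cancel hm]
        gcongr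

theorem norm_le_one_add_fninf {m : ℕ} {f : ℤ[X]} (hmonic : f.Monic) (hdeg : f.natDegree = m)
    {z : ℂ} (hz : aeval z f = 0) : ‖z‖ ≤ 1 + fninf m f := by
  set p := f.map (Int.castRingHom ℂ)
  have hp : p.Monic := hmonic.map _
  have hroot : p.IsRoot z := by simpa [p, aeval_def, eval₂_eq_eval_map] using hz
  have hfninf := fninf_nonneg m f
  have hsup : (range p.natDegree).sup (fun i => ‖p.coeff i‖₊) ≤ (fninf m f : ℝ).toNNReal := by
    refine Finset.sup_le fun i hi => ?_
    rw [hmonic.natDegree_map, hdeg, mem_range] at hi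
    rw [Real.le_toNNReal_iff_coe_le hfninf, coe_nnnorm]
    simpa [p] using abs_coeff_le_fninf f hi
  have hz := NNReal.coe_le_coe.mpr (hroot.norm_lt_cauchyBound hp.ne_zero).le
  rw [cauchyBound, hp.leadingCoeff, nnnorm_one, div_one, NNReal.coe_add, NNReal.coe_one,
    coe_nnnorm] at hz
  have := NNReal.coe_le_coe.mpr hsup
  rw [Real.coe_toNNReal _ hfninf] at this
  linarith

theorem norm_sum_intCast_mul_pow_le {m : ℕ} (a : Fin m → ℤ) {z : ℂ} {U : ℝ} (hU : 1 ≤ U)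
    (hz : ‖z‖ ≤ U) : ‖∑ i, (a i : ℂ) * z ^ (i : ℕ)‖ ≤ m * (opc a * U ^ (m - 1)) := by
  have hterm : ∀ i : Fin m, ‖(a i : ℂ) * z ^ (i : ℕ)‖ ≤ opc a * U ^ (m - 1) := by
    intro i
    rw [norm_mul, norm_pow, Complex.norm_intCast]
    gcongr
    · exact (abs_nonneg _).trans (abs_le_opc a i)
    · exact abs_le_opc a i
    · calc ‖z‖ ^ (i : ℕ) ≤ U ^ (i : ℕ) := by gcongr
        _ ≤ U ^ (m - 1) := pow_le_pow_right₀ hU (by omega)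
  calc ‖∑ i, (a i : ℂ) * z ^ (i : ℕ)‖ ≤ ∑ i : Fin m, ‖(a i : ℂ) * z ^ (i : ℕ)‖ := norm_sum_le _ _
    _ ≤ ∑ _i : Fin m, opc a * U ^ (m - 1) := sum_le_sum fun i _ => hterm i
    _ = m * (opc a * U ^ (m - 1)) := by simp

theorem one_le_prod_norm_embeddings {K : Type*} [Field K] [Algebra ℚ K] [FiniteDimensional ℚ K]
    {x : K} (hx : IsIntegral ℤ x) (hx0 : x ≠ 0) :
    1 ≤ ∏ σ : K →ₐ[ℚ] ℂ, ‖σ x‖ := by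
  obtain ⟨n, hn⟩ := IsIntegrallyClosed.isIntegral_iff.mp (Algebra.isIntegral_norm ℚ hx)
  have hn0 : n ≠ 0 := by
    rintro rfl
    exact hx0 (by simpa using hn.symm)
  rw [← norm_prod, ← Algebra.norm_eq_prod_embeddings ℚ ℂ x, ← hn]
  rw [eq_intCast, eq_ratCast, Rat.cast_intCast, Complex.norm_intCast]
  exact_mod_cast Int.one_le_abs hn0

theorem one_le_mul_pow_of_one_le_prod {ι : Type*} [Fintype ι] {x : ι → ℝ} {C : ℝ}
    (hx0 : ∀ i, 0 ≤ x i) (hxC : ∀ i, x i ≤ C) (h : 1 ≤ ∏ i, x i) (i₀ : ι) :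
    1 ≤ x i₀ * C ^ (Fintype.card ι - 1) := by
  classical
  rw [← mul_prod_erase univ x (mem_univ i₀)] at h
  refine h.trans (mul_le_mul_of_nonneg_left ?_ (hx0 i₀))
  calc ∏ i ∈ univ.erase i₀, x i ≤ ∏ _i ∈ univ.erase i₀, C :=
        prod_le_prod (fun i _ => hx0 i) (fun i _ => hxC i)
    _ = C ^ (Fintype.card ι - 1) := by rw [prod_const, card_erase_of_mem (mem_univ i₀), card_univ]

theorem aeval_map_intCastRingHom {A : Type*} [CommRing A] [Algebra ℚ A] (f : ℤ[X]) (x : A) :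
    aeval x (f.map (Int.castRingHom ℚ)) = aeval x f :=
  aeval_map_algebraMap ℚ x f

theorem one_le_abs_mul_pow {m : ℕ} {f : ℤ[X]} (hmonic : f.Monic) (hdeg : f.natDegree = m)
    (hirr : Irreducible (f.map (Int.castRingHom ℚ))) {α : ℝ} (hroot : aeval α f = 0)
    {a : Fin m → ℤ} (ha : (∑ i, (a i : ℝ) * α ^ (i : ℕ)) ≠ 0) :
    1 ≤ |∑ i, (a i : ℝ) * α ^ (i : ℕ)| * ((opc a : ℝ) * Malpha m f) ^ (m - 1) := by
  set F := f.map (Int.castRingHom ℚ)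
  have : Fact (Irreducible F) := ⟨hirr⟩
  have hF : F.Monic := hmonic.map _
  let pb := AdjoinRoot.powerBasis hF.ne_zero
  have : FiniteDimensional ℚ (AdjoinRoot F) := pb.finite
  have hcard : Fintype.card (AdjoinRoot F →ₐ[ℚ] ℂ) = m := by
    rw [AlgHom.card, pb.finrank, AdjoinRoot.powerBasis_dim, hmonic.natDegree_map, hdeg]
  have hθ : aeval (AdjoinRoot.root F) F = 0 := by
    rw [aeval_def]
    exact AdjoinRoot.eval₂_root F
  set θ := AdjoinRoot.root F
  set x : AdjoinRoot F := ∑ i, (a i : AdjoinRoot F) * θ ^ (i : ℕ)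
  have hx : IsIntegral ℤ x := by
    have hθint : IsIntegral ℤ θ := ⟨f, hmonic, by
      convert hθ using 1
      rw [aeval_def, eval₂_map]
      congr 1⟩
    exact IsIntegral.sum _ fun i _ => isIntegral_algebraMap.mul (hθint.pow _)
  have hσx : ∀ σ : AdjoinRoot F →ₐ[ℚ] ℂ, σ x = ∑ i, (a i : ℂ) * σ θ ^ (i : ℕ) := by
    intro σ
    simp [x]
  have hFα : aeval α F = 0 := by rw [aeval_map_intCastRingHom, hroot]
  let σ₀ : AdjoinRoot F →ₐ[ℚ] ℂ := (Complex.ofRealAm.restrictScalars ℚ).comp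
    (AdjoinRoot.liftAlgHom F (Algebra.ofId ℚ ℝ) α hFα)
  have hσ₀ : ‖σ₀ x‖ = |∑ i, (a i : ℝ) * α ^ (i : ℕ)| := by
    rw [hσx]
    have hσ₀θ : σ₀ θ = α := congrArg ((↑) : ℝ → ℂ) (AdjoinRoot.liftAlgHom_root F _ _ hFα)
    rw [hσ₀θ, ← Real.norm_eq_abs, ← Complex.norm_real]
    push_cast
    rfl
  have hx0 : x ≠ 0 := fun h => ha (by simpa [h] using hσ₀.symm)
  have hbound : ∀ σ : AdjoinRoot F →ₐ[ℚ] ℂ, ‖σ x‖ ≤ opc a * Malpha m f := by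
    intro σ
    have hσθ : aeval (σ θ) f = 0 := by
      rw [← aeval_map_intCastRingHom, aeval_algHom_apply, hθ, map_zero]
    have := norm_sum_intCast_mul_pow_le a
      (le_add_of_nonneg_right (fninf_nonneg m f)) (norm_le_one_add_fninf hmonic hdeg hσθ)
    rwa [hσx, Malpha, mul_left_comm]
  have := one_le_mul_pow_of_one_le_prod (fun σ => norm_nonneg (σ x)) hbound
    (one_le_prod_norm_embeddings hx hx0) σ₀
  rwa [hcard, hσ₀] at this

theorem add_pow_le_sum_range_pow {b ε : ℝ} (hb : 0 ≤ b) (hε : 0 ≤ ε) {n : ℕ} (h : n * ε ≤ 1) :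
    (b + ε) ^ n ≤ ∑ k ∈ range (n + 1), b ^ k := by
  rw [add_pow]
  -- each binomial weight satisfies `C(n, k) ε^(n-k) ≤ (n ε)^(n-k) ≤ 1`
  refine sum_le_sum fun k hk => ?_
  have hkn : k ≤ n := Nat.lt_succ_iff.mp (mem_range.mp hk)
  have hchoose : (n.choose k : ℝ) ≤ (n : ℝ) ^ (n - k) := by
    rw [← Nat.choose_symm hkn]
    exact_mod_cast Nat.choose_le_pow n (n - k)
  have : ε ^ (n - k) * n.choose k ≤ 1 :=
    calc ε ^ (n - k) * n.choose k ≤ ε ^ (n - k) * (n : ℝ) ^ (n - k) := by gcongr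
      _ = (n * ε) ^ (n - k) := by ring
      _ ≤ 1 := pow_le_one₀ (by positivity) h
  calc b ^ k * ε ^ (n - k) * n.choose k = b ^ k * (ε ^ (n - k) * n.choose k) := by ring
    _ ≤ b ^ k := mul_le_of_le_one_right (by positivity) this

theorem abs_add_pow_sub_pow_le {m n : ℕ} (hn : n < m) (x : ℝ) {η ε : ℝ} (hη : |η| ≤ ε)
    (hε : ((m : ℝ) - 1) * ε ≤ 1) : |(x + η) ^ n - x ^ n| ≤ ((m : ℝ) - 1) * ε * Salpha m x := by
  have hε0 : 0 ≤ ε := (abs_nonneg η).trans hη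
  have hm : (1 : ℝ) ≤ m := by exact_mod_cast hn.trans_le' (Nat.zero_le n)
  obtain _ | k := n
  · simp only [pow_zero, sub_self, abs_zero]
    exact mul_nonneg (mul_nonneg (by linarith) hε0) (sum_nonneg fun _ _ => by positivity)
  have hkm : ((k + 1 : ℕ) : ℝ) ≤ (m : ℝ) - 1 := by
    rw [le_sub_iff_add_le]; exact_mod_cast hn
  have hmax : max |x + η| |x| ≤ |x| + ε :=
    max_le ((abs_add_le x η).trans (by linarith)) (by linarith)
  have hpow : (|x| + ε) ^ k ≤ Salpha m x :=
    calc (|x| + ε) ^ k ≤ ∑ j ∈ range (k + 1), |x| ^ j :=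
          add_pow_le_sum_range_pow (abs_nonneg x) hε0 (by push_cast at hkm; nlinarith)
      _ ≤ Salpha m x :=
          sum_le_sum_of_subset_of_nonneg (range_subset_range.mpr (by omega)) fun _ _ _ => by positivity
  calc |(x + η) ^ (k + 1) - x ^ (k + 1)| ≤ |x + η - x| * (k + 1 : ℕ) * max |x + η| |x| ^ k :=
        abs_pow_sub_pow_le ..
    _ ≤ ε * ((m : ℝ) - 1) * Salpha m x := by
        rw [add_sub_cancel_left]
        gcongr
        exact (pow_le_pow_left₀ (by positivity) hmax k).trans hpow
    _ = ((m : ℝ) - 1) * ε * Salpha m x := by ring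

theorem abs_sum_mul_add_pow_sub_le {m : ℕ} (a : Fin m → ℤ) (x : ℝ) {η ε : ℝ} (hη : |η| ≤ ε)
    (hε : ((m : ℝ) - 1) * ε ≤ 1) :
    |∑ i, (a i : ℝ) * (x + η) ^ (i : ℕ) - ∑ i, (a i : ℝ) * x ^ (i : ℕ)| ≤
      m * opc a * (((m : ℝ) - 1) * ε * Salpha m x) := by
  rw [← sum_sub_distrib]
  calc |∑ i, ((a i : ℝ) * (x + η) ^ (i : ℕ) - (a i : ℝ) * x ^ (i : ℕ))|
      ≤ ∑ i, |(a i : ℝ)| * |(x + η) ^ (i : ℕ) - x ^ (i : ℕ)| := by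
        simpa only [← mul_sub, abs_mul] using
          abs_sum_le_sum_abs (fun i : Fin m => (a i : ℝ) * (x + η) ^ (i : ℕ) - a i * x ^ (i : ℕ)) univ
    _ ≤ ∑ _i : Fin m, (opc a : ℝ) * (((m : ℝ) - 1) * ε * Salpha m x) :=
        sum_le_sum fun i _ => mul_le_mul (abs_le_opc a i)
          (abs_add_pow_sub_pow_le i.isLt x hη hε) (abs_nonneg _)
          ((abs_nonneg _).trans (abs_le_opc a i))
    _ = m * opc a * (((m : ℝ) - 1) * ε * Salpha m x) := by simp [mul_assoc]

theorem stmt_7_general (m : ℕ) (hm : 2 ≤ m) (f : Polynomial ℤ)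
    (hmonic : f.Monic) (hdeg : f.natDegree = m)
    (hirr : Irreducible (f.map (Int.castRingHom ℚ)))
    (α : ℝ) (hroot : Polynomial.aeval α f = 0)
    (a : Fin m → ℤ) (ha : (∑ i, (a i : ℝ) * α ^ (i : ℕ)) ≠ 0)
    (d : ℝ)
    (hd : d ≥ ((m : ℝ) - 1) *
      (1 + ((opc a : ℤ) : ℝ) ^ m * Palpha m f * Salpha m α ^ 2)) :
    ∀ ε : ℝ, 0 < ε → ε ≤ 1 / d →
      |(∑ i, (a i : ℝ) * (α + ε) ^ (i : ℕ)) - ∑ i, (a i : ℝ) * α ^ (i : ℕ)| <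
          |∑ i, (a i : ℝ) * α ^ (i : ℕ)| ∧
        |(∑ i, (a i : ℝ) * (α - ε) ^ (i : ℕ)) - ∑ i, (a i : ℝ) * α ^ (i : ℕ)| <
          |∑ i, (a i : ℝ) * α ^ (i : ℕ)| := by
  intro ε hε hεd
  set G := ∑ i, (a i : ℝ) * α ^ (i : ℕ)
  set R := ((opc a : ℝ) * Malpha m f) ^ (m - 1)
  set X := (opc a : ℝ) ^ m * Palpha m f * Salpha m α ^ 2
  have hm1 : (1 : ℝ) ≤ m - 1 := by
    rw [le_sub_iff_add_le]; exact_mod_cast hm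
  have hR : 0 ≤ R := pow_nonneg (mul_nonneg (opc_nonneg a) (Malpha_nonneg m f)) _
  have hX : m * opc a * Salpha m α * R ≤ X :=
    mul_opc_mul_Salpha_mul_pow_le (by omega) hmonic hdeg a α
  have hX0 : 0 ≤ X := by
    have := opc_nonneg a
    have := one_le_Salpha (m := m) (by omega) α
    exact le_trans (by positivity) hX
  have hεd' : ε * d ≤ 1 := (le_div_iff₀ (by nlinarith)).mp hεd
  have hεm : ((m : ℝ) - 1) * ε ≤ 1 := by nlinarith
  have hsmall : ((m : ℝ) - 1) * ε * X < 1 := by nlinarith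
  have hlow : 1 ≤ |G| * R := one_le_abs_mul_pow hmonic hdeg hirr hroot ha
  have key : ∀ η, |η| ≤ ε → |∑ i, (a i : ℝ) * (α + η) ^ (i : ℕ) - G| < |G| := by
    intro η hη
    have hdiff := abs_sum_mul_add_pow_sub_le a α hη hεm
    refine lt_of_mul_lt_mul_right ?_ hR
    calc |∑ i, (a i : ℝ) * (α + η) ^ (i : ℕ) - G| * R
        ≤ ((m : ℝ) - 1) * ε * (m * opc a * Salpha m α * R) := by nlinarith
      _ ≤ ((m : ℝ) - 1) * ε * X := by gcongr
      _ < |G| * R := by linarith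
  refine ⟨key ε (abs_of_pos hε).le, ?_⟩
  simpa only [sub_eq_add_neg] using key (-ε) (by rw [abs_neg, abs_of_pos hε])

theorem stmt_7 (m : ℕ) (hm : 2 ≤ m) (f : Polynomial ℤ)
    (hmonic : f.Monic) (hdeg : f.natDegree = m)
    (hirr : Irreducible (f.map (Int.castRingHom ℚ)))
    (α : ℝ) (hroot : Polynomial.aeval α f = 0)
    (a : Fin m → ℤ) (ha : (∑ i, (a i : ℝ) * α ^ (i : ℕ)) ≠ 0)
    (d : ℝ) (hd0 : 0 < d)
    (hd : d ≥ ((m : ℝ) - 1) *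
      (1 + ((opc a : ℤ) : ℝ) ^ m * Palpha m f * Salpha m α ^ 2)) :
    ∀ ε : ℝ, 0 < ε → ε ≤ 1 / d →
      |(∑ i, (a i : ℝ) * (α + ε) ^ (i : ℕ)) - ∑ i, (a i : ℝ) * α ^ (i : ℕ)| <
          |∑ i, (a i : ℝ) * α ^ (i : ℕ)| ∧
        |(∑ i, (a i : ℝ) * (α - ε) ^ (i : ℕ)) - ∑ i, (a i : ℝ) * α ^ (i : ℕ)| <
          |∑ i, (a i : ℝ) * α ^ (i : ℕ)| :=
  stmt_7_general m hm f hmonic hdeg hirr α hroot a ha d hd
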